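/- Suppose nonnegative reals q_k satisfy the recursion q_{k+1} ≤ (1 − 2μh_k)q_k + h_k²σ², and h_k = 1/(μ(k + c)) with c = σ²/(μ² q_0). Then q_k ≤ 1/(α k + q_0⁻¹) for all k ≥ 0, where α = μ²/σ². -/
import Mathlib


theorem sgd_rate (μ σ : ℝ) (hμ : 0 < μ) (hσ : 0 < σ)
    (q : ℕ → ℝ) (hq0 : 0 < q 0) (hqnn : ∀ k, 0 ≤ q k)
    (h : ℕ → ℝ) (hh : ∀ k, h k = 1 / (μ * ((k : ℝ) + σ ^ 2 / (μ ^ 2 * q 0))))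
    (hrec : ∀ k, q (k + 1) ≤ (1 - 2 * μ * h k) * q k + (h k) ^ 2 * σ ^ 2) :
    ∀ k : ℕ, q k ≤ 1 / ((μ ^ 2 / σ ^ 2) * (k : ℝ) + 1 / q 0) := by
  have hμ2 : 0 < μ ^ 2 := by positivity
  have hσ2 : 0 < σ ^ 2 := by positivity
  set c : ℝ := σ ^ 2 / (μ ^ 2 * q 0) with hc
  have hc0 : 0 < c := by positivity
  have hq0c : q 0 = σ ^ 2 / (μ ^ 2 * c) := by
    rw [hc]; field_simp
  have hrec' : ∀ k : ℕ, q (k + 1) ≤ (1 - 2 / ((k : ℝ) + c)) * q k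
      + (σ ^ 2 / μ ^ 2) / ((k : ℝ) + c) ^ 2 := by
    intro k
    have ht : 0 < (k : ℝ) + c := by positivity
    have H := hrec k
    rw [hh k] at H
    refine H.trans_eq ?_
    field_simp
  have main : ∀ k : ℕ, q k ≤ σ ^ 2 / (μ ^ 2 * ((k : ℝ) + c)) := by
    rcases le_or_gt 1 c with hc1 | hc1
    · intro k
      induction k with
      | zero => simp [hq0c]
      | succ n ih =>
        have ht : 0 < (n : ℝ) + c := by positivity
        have step := hrec' n
        have hqn := hqnn n
        push_cast
        rcases Nat.eq_zero_or_pos n with rfl | hn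
        · rw [hq0c] at step
          refine step.trans ?_
          have hE : (1 - 2 / ((0:ℝ) + c)) * (σ ^ 2 / (μ ^ 2 * c)) + σ ^ 2 / μ ^ 2 / ((0:ℝ) + c) ^ 2
              = σ ^ 2 * (c - 1) / (μ ^ 2 * c ^ 2) := by
            field_simp
            ring
          push_cast
          rw [hE, div_le_div_iff₀ (by positivity) (by positivity)]
          nlinarith [sq_nonneg c]
        · have hn1 : (1 : ℝ) ≤ (n : ℝ) := by exact_mod_cast hn
          have ht2 : (2 : ℝ) ≤ (n : ℝ) + c := by linarith
          have hslope : 0 ≤ 1 - 2 / ((n : ℝ) + c) := by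
            rw [sub_nonneg, div_le_one ht]; linarith
          have h1 : q (n + 1) ≤ (1 - 2 / ((n : ℝ) + c)) * (σ ^ 2 / (μ ^ 2 * ((n : ℝ) + c)))
              + (σ ^ 2 / μ ^ 2) / ((n : ℝ) + c) ^ 2 := by
            refine step.trans ?_
            gcongr
          refine h1.trans ?_
          have hE : (1 - 2 / ((n:ℝ) + c)) * (σ ^ 2 / (μ ^ 2 * ((n:ℝ) + c))) + σ ^ 2 / μ ^ 2 / ((n:ℝ) + c) ^ 2
              = σ ^ 2 * ((n:ℝ) + c - 1) / (μ ^ 2 * ((n:ℝ) + c) ^ 2) := by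
            field_simp
            ring
          rw [hE, div_le_div_iff₀ (by positivity) (by positivity)]
          nlinarith [sq_nonneg ((n:ℝ) + c)]
    · exfalso
      have step := hrec' 0
      rw [hq0c] at step
      push_cast at step
      have hq1 := hqnn 1
      have hrhs : (1 - 2 / (0 + c)) * (σ ^ 2 / (μ ^ 2 * c)) + (σ ^ 2 / μ ^ 2) / (0 + c) ^ 2 < 0 := by
        have : (1 - 2 / c) * (σ ^ 2 / (μ ^ 2 * c)) + (σ ^ 2 / μ ^ 2) / c ^ 2
            = (σ ^ 2 / μ ^ 2) * ((c - 1) / c ^ 2) := by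
          field_simp; ring
        rw [zero_add, this]
        apply mul_neg_of_pos_of_neg (by positivity)
        apply div_neg_of_neg_of_pos (by linarith) (by positivity)
      linarith
  intro k
  have hk := main k
  have heq : σ ^ 2 / (μ ^ 2 * ((k : ℝ) + c)) = 1 / ((μ ^ 2 / σ ^ 2) * (k : ℝ) + 1 / q 0) := by
    rw [hc]; field_simp
  linarith [heq ▸ hk]
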